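/- arXiv:1905.04966 — 6 statements merged into one kernel-verified Lean document; each statement's English description precedes it below -/
import Mathlib

section
/- Let ℓ be a prime and n a natural number. The quotient ring ℤ_ℓ[T]/(T^{ℓ^n} − 1) is a local ring whose maximal ideal is generated by ℓ and T − 1. -/
/-!
Every maximal ideal `M` of `A = ℤ_ℓ[T]/(T^{ℓ^n} - 1)` contracts to the maximal ideal `(ℓ)` of
`ℤ_ℓ`, because `A` is finite over `ℤ_ℓ`; so `ℓ ∈ M`. Modulo `ℓ` we have
`(T - 1)^{ℓ^n} = T^{ℓ^n} - 1 = 0`, hence also `T - 1 ∈ M`. Since `A/(ℓ, T - 1) ≅ 𝔽_ℓ`, the ideal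
`(ℓ, T - 1)` is maximal, so it is the only maximal ideal of `A`.
-/

open Polynomial IsLocalRing

theorem Ideal.sub_one_mem_of_pow_prime_pow_eq_one {S : Type*} [CommRing S] {P : Ideal S}
    [P.IsPrime] {p : ℕ} (hp : p.Prime) (hpP : (p : S) ∈ P) {x : S} {n : ℕ}
    (hx : x ^ p ^ n = 1) : x - 1 ∈ P := by
  obtain ⟨r, hr⟩ := exists_add_pow_prime_pow_eq hp (x - 1) 1 n
  rw [sub_add_cancel, hx, one_pow] at hr
  have hpow : (x - 1) ^ p ^ n = p * (-(x - 1) * r) := by linear_combination -hr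
  refine Ideal.IsPrime.mem_of_pow_mem ‹_› (p ^ n) ?_
  rw [hpow]
  exact P.mul_mem_right _ hpP

theorem IsLocalRing.algebraMap_mem_of_isIntegral {R S : Type*} [CommRing R] [IsLocalRing R]
    [CommRing S] [Algebra R S] [Algebra.IsIntegral R S] (M : Ideal S) [M.IsMaximal] {r : R}
    (hr : r ∈ maximalIdeal R) : algebraMap R S r ∈ M := by
  rwa [← Ideal.mem_comap, eq_maximalIdeal (Ideal.isMaximal_comap_of_isIntegral_of_isMaximal M)]

namespace Polynomial

variable {R : Type*} [CommRing R]

theorem isMaximal_span_C_X_sub_C {a : R} (ha : (Ideal.span {a}).IsMaximal) (b : R) :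
    (Ideal.span {C a, X - C b} : Ideal R[X]).IsMaximal :=
  Ideal.Quotient.maximal_of_isField _ <| (quotientSpanCXSubCAlgEquiv a b).toMulEquiv.isField <|
    (Ideal.Quotient.maximal_ideal_iff_isField_quotient _).mp ha

theorem Monic.isIntegral_quotient_span {f : R[X]} (hf : f.Monic) :
    Algebra.IsIntegral R (R[X] ⧸ Ideal.span {f}) :=
  have := hf.finite_adjoinRoot
  Algebra.IsIntegral.of_finite R (AdjoinRoot f)

theorem isMaximal_span_mk_C_mk_X_sub_one {a : R} (ha : (Ideal.span {a}).IsMaximal) (k : ℕ) :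
    (Ideal.span {Ideal.Quotient.mk (Ideal.span {(X : R[X]) ^ k - 1}) (C a),
      Ideal.Quotient.mk (Ideal.span {(X : R[X]) ^ k - 1}) (X - 1)}).IsMaximal := by
  have hle : Ideal.span {(X : R[X]) ^ k - 1} ≤ Ideal.span {C a, X - C 1} := by
    rw [Ideal.span_le, Set.singleton_subset_iff, C_1]
    exact Ideal.mem_of_dvd _ (sub_one_dvd_pow_sub_one _ _) (Ideal.subset_span (by simp))
  have := (isMaximal_span_C_X_sub_C ha 1).map_of_surjective_of_ker_le
    (Ideal.Quotient.mk_surjective (I := Ideal.span {(X : R[X]) ^ k - 1})) (by rwa [Ideal.mk_ker])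
  simpa [Ideal.map_span, Set.image_insert_eq] using this

theorem span_mk_C_mk_X_sub_one_le_of_isMaximal [IsLocalRing R] {p : ℕ} (hp : p.Prime)
    (hpR : (p : R) ∈ maximalIdeal R) (n : ℕ)
    (M : Ideal (R[X] ⧸ Ideal.span {(X : R[X]) ^ p ^ n - 1})) [M.IsMaximal] :
    Ideal.span {Ideal.Quotient.mk (Ideal.span {(X : R[X]) ^ p ^ n - 1}) (C (p : R)),
      Ideal.Quotient.mk (Ideal.span {(X : R[X]) ^ p ^ n - 1}) (X - 1)} ≤ M := by
  have hmonic : ((X : R[X]) ^ p ^ n - 1).Monic := by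
    simpa using monic_X_pow_sub_C (1 : R) (pow_ne_zero n hp.ne_zero)
  have := hmonic.isIntegral_quotient_span
  have hpM : (p : R[X] ⧸ Ideal.span {(X : R[X]) ^ p ^ n - 1}) ∈ M := by
    simpa using algebraMap_mem_of_isIntegral M hpR
  have hX : Ideal.Quotient.mk (Ideal.span {(X : R[X]) ^ p ^ n - 1}) X ^ p ^ n = 1 := by
    rw [← map_pow, ← sub_eq_zero, ← map_one (Ideal.Quotient.mk _), ← map_sub,
      Ideal.Quotient.eq_zero_iff_mem]
    exact Ideal.subset_span rfl
  rw [Ideal.span_le, Set.insert_subset_iff, Set.singleton_subset_iff, map_sub, map_one]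
  exact ⟨by simpa using hpM, Ideal.sub_one_mem_of_pow_prime_pow_eq_one hp hpM hX⟩

end Polynomial

open Polynomial in
theorem local_ring_group_ring (ℓ : ℕ) [Fact ℓ.Prime] (n : ℕ) :
    ∃ h : IsLocalRing ((ℤ_[ℓ])[X] ⧸ Ideal.span {(X : (ℤ_[ℓ])[X]) ^ ℓ ^ n - 1}),
      @IsLocalRing.maximalIdeal _ _ h =
        Ideal.span {Ideal.Quotient.mk (Ideal.span {(X : (ℤ_[ℓ])[X]) ^ ℓ ^ n - 1}) (C (ℓ : ℤ_[ℓ])),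
          Ideal.Quotient.mk (Ideal.span {(X : (ℤ_[ℓ])[X]) ^ ℓ ^ n - 1}) ((X : (ℤ_[ℓ])[X]) - 1)} := by
  have hm := isMaximal_span_mk_C_mk_X_sub_one
    (PadicInt.maximalIdeal_eq_span_p (p := ℓ) ▸ maximalIdeal.isMaximal ℤ_[ℓ]) (ℓ ^ n)
  have hloc : IsLocalRing ((ℤ_[ℓ])[X] ⧸ Ideal.span {(X : (ℤ_[ℓ])[X]) ^ ℓ ^ n - 1}) :=
    .of_unique_max_ideal ⟨_, hm, fun M _ => (hm.eq_of_le (Ideal.IsMaximal.ne_top ‹_›)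
      (span_mk_C_mk_X_sub_one_le_of_isMaximal Fact.out PadicInt.p_nonunit n M)).symm⟩
  exact ⟨hloc, (eq_maximalIdeal hm).symm⟩
end

section
/- Let ℓ be a prime, G a finite cyclic group of ℓ-power order acting on a finite abelian group M, and C a G-stable subgroup of M. If ℓ does not divide the order of the fixed-point subgroup (M/C)^G, then the ℓ-Sylow subgroup of M equals the ℓ-Sylow subgroup of C. In particular, if ℓ ∤ |M^G| then ℓ ∤ |M|. -/
/-!
The action of `G` descends to `M ⧸ C`, and `x ∈ C` for every `x` of `ℓ`-power order as soon
as the `ℓ`-primary component of `M ⧸ C` is trivial. If it were not, it would be a nontrivial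
`ℓ`-group on which the `ℓ`-group `G` acts; its number of fixed points is then divisible by `ℓ`,
so besides `1` there is a fixed point `b ≠ 1`. But `b` has `ℓ`-power order in `(M ⧸ C)^G`,
whose order is prime to `ℓ`, forcing `b = 1`.
-/

theorem eq_one_of_pow_prime_pow_eq_one_of_not_dvd_card {K : Type*} [Group K] {p k : ℕ}
    (hp : p.Prime) (hK : ¬ p ∣ Nat.card K) {x : K} (hx : x ^ p ^ k = 1) : x = 1 := by
  have hcop : (p ^ k).Coprime (Nat.card K) := (hp.coprime_iff_not_dvd.mpr hK).pow_left k
  exact orderOf_eq_one_iff.mp <|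
    (hcop.coprime_dvd_left (orderOf_dvd_of_pow_eq_one hx)).eq_one_of_dvd (orderOf_dvd_natCard x)

namespace CommGroup

variable {G Q : Type*} [Group G] [CommGroup Q] [MulDistribMulAction G Q] {p : ℕ}

theorem smul_mem_primaryComponent (g : G) {y : Q} (hy : y ∈ primaryComponent Q p) :
    g • y ∈ primaryComponent Q p := by
  obtain ⟨k, hk⟩ := hy
  exact ⟨k, by rw [← smul_pow', hk, smul_one]⟩

instance : MulAction G (primaryComponent Q p) where
  smul g y := ⟨g • (y : Q), smul_mem_primaryComponent g y.2⟩
  one_smul y := Subtype.ext (one_smul G (y : Q))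
  mul_smul g h y := Subtype.ext (mul_smul g h (y : Q))

theorem primaryComponent_eq_bot_of_not_dvd_card_fixedPoints [Fact p.Prime] [Finite Q]
    (hG : IsPGroup p G) (hfix : ¬ p ∣ Nat.card (FixedPoints.subgroup G Q)) :
    primaryComponent Q p = ⊥ := by
  by_contra hne
  have hdvd : p ∣ Nat.card (primaryComponent Q p) :=
    primaryComponent.isPGroup.card_eq_or_dvd.resolve_left (mt Subgroup.card_eq_one.mp hne)
  obtain ⟨b, hb_fixed, hb_ne⟩ :=
    hG.exists_fixed_point_of_prime_dvd_card_of_fixed_point _ hdvd (a := 1)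
      fun g => Subtype.ext (smul_one g)
  obtain ⟨k, hk⟩ := b.2
  have hb_one :
      (⟨b, fun g => congrArg Subtype.val (hb_fixed g)⟩ : FixedPoints.subgroup G Q) = 1 :=
    eq_one_of_pow_prime_pow_eq_one_of_not_dvd_card Fact.out hfix (Subtype.ext hk)
  exact hb_ne (Subtype.ext (congrArg Subtype.val hb_one).symm)

end CommGroup

namespace QuotientGroup

variable {G M : Type*} [Monoid G] [CommGroup M] [MulDistribMulAction G M]
  (C : Subgroup M) (hC : ∀ (g : G) (x : M), x ∈ C → g • x ∈ C)

abbrev mulDistribMulAction : MulDistribMulAction G (M ⧸ C) :=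
  letI : SMul G (M ⧸ C) := ⟨fun g => map C C (MulDistribMulAction.toMonoidHom M g) (hC g)⟩
  (mk'_surjective C).mulDistribMulAction (mk' C) fun _ _ => rfl

theorem mem_fixedPoints_subgroup_iff (q : M ⧸ C) :
    letI := mulDistribMulAction C hC
    q ∈ FixedPoints.subgroup G (M ⧸ C) ↔
      ∀ (g : G) (x : M), (x : M ⧸ C) = q → ((g • x : M) : M ⧸ C) = q := by
  let _ := mulDistribMulAction C hC
  refine ⟨fun hq g x hx => hx ▸ hq g, fun hq g => ?_⟩
  induction q using QuotientGroup.induction_on with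
  | H x => exact hq g x rfl

end QuotientGroup

theorem sylow_eq_of_coprime_fixed_quotient_general (ℓ : ℕ) (hℓ : ℓ.Prime)
    {G M : Type*} [Group G] (e : ℕ) (hG : Nat.card G = ℓ ^ e)
    [CommGroup M] [Finite M] [MulDistribMulAction G M]
    (C : Subgroup M) (hC : ∀ (g : G) (x : M), x ∈ C → g • x ∈ C)
    (h : ¬ ℓ ∣ Nat.card {q : M ⧸ C // ∀ (g : G) (x : M),
        (QuotientGroup.mk x : M ⧸ C) = q → (QuotientGroup.mk (g • x) : M ⧸ C) = q}) :
    ∀ x : M, (∃ k : ℕ, x ^ ℓ ^ k = 1) → x ∈ C := by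
  have : Fact ℓ.Prime := ⟨hℓ⟩
  let _ := QuotientGroup.mulDistribMulAction C hC
  have hfix : ¬ ℓ ∣ Nat.card (FixedPoints.subgroup G (M ⧸ C)) := by
    rwa [Nat.card_congr (Equiv.subtypeEquivRight (QuotientGroup.mem_fixedPoints_subgroup_iff C hC))]
  have hbot :=
    CommGroup.primaryComponent_eq_bot_of_not_dvd_card_fixedPoints (IsPGroup.of_card hG) hfix
  rintro x ⟨k, hk⟩
  rw [← QuotientGroup.eq_one_iff, ← Subgroup.mem_bot, ← hbot]
  exact ⟨k, by rw [← QuotientGroup.mk_pow, hk, QuotientGroup.mk_one]⟩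

theorem sylow_eq_of_coprime_fixed_quotient (ℓ : ℕ) (hℓ : ℓ.Prime)
    {G M : Type*} [Group G] [IsCyclic G] [Finite G] (e : ℕ) (hG : Nat.card G = ℓ ^ e)
    [CommGroup M] [Finite M] [MulDistribMulAction G M]
    (C : Subgroup M) (hC : ∀ (g : G) (x : M), x ∈ C → g • x ∈ C)
    (h : ¬ ℓ ∣ Nat.card {q : M ⧸ C // ∀ (g : G) (x : M),
        (QuotientGroup.mk x : M ⧸ C) = q → (QuotientGroup.mk (g • x) : M ⧸ C) = q}) :
    ∀ x : M, (∃ k : ℕ, x ^ ℓ ^ k = 1) → x ∈ C :=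
  sylow_eq_of_coprime_fixed_quotient_general ℓ hℓ e hG C hC h
end

section
/- Let p be a prime with p ≡ 7 (mod 16), and let u, v be integers with u² − p·v² = 2. Then v ≡ ±1 (mod 8) and u ≡ ±3 (mod 8). -/
/-- If 2 is a square mod an odd natural number `n`, then `n ≡ ±1 (mod 8)`. -/
lemma two_sq_mod_eight (n : ℕ) (hn : Odd n) (h : ∃ x : ZMod n, x ^ 2 = 2) :
    n % 8 = 1 ∨ n % 8 = 7 := by
  induction n using Nat.strong_induction_on with
  | _ n ih =>
    rcases eq_or_lt_of_le (Nat.one_le_iff_ne_zero.2 hn.pos.ne') with h1 | h1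
    · left; omega
    · set q := n.minFac with hq
      have hqp : q.Prime := Nat.minFac_prime (by omega)
      have hqd : q ∣ n := Nat.minFac_dvd n
      have hq2 : q ≠ 2 := by
        intro h2
        exact (Nat.not_even_iff_odd.2 hn) (even_iff_two_dvd.2 (h2 ▸ hqd))
      set m := n / q with hm
      have hnm : n = q * m := (Nat.mul_div_cancel' hqd).symm
      have hmlt : m < n := Nat.div_lt_self hn.pos hqp.one_lt
      have hdm : m ∣ n := ⟨q, by rw [hnm, Nat.mul_comm]⟩
      have hmodd : Odd m := by
        rcases Nat.even_or_odd m with he | ho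
        · exact absurd (hnm ▸ he.mul_left q) (Nat.not_even_iff_odd.2 hn)
        · exact ho
      obtain ⟨x, hx⟩ := h
      -- 2 is a square mod q
      haveI : Fact q.Prime := ⟨hqp⟩
      have hq8 : q % 8 = 1 ∨ q % 8 = 7 := by
        rw [← ZMod.exists_sq_eq_two_iff hq2]
        refine ⟨ZMod.castHom hqd (ZMod q) x, ?_⟩
        have h2 : (ZMod.castHom hqd (ZMod q)) x * (ZMod.castHom hqd (ZMod q)) x = 2 := by
          rw [← map_mul, ← sq, hx]; simp
          have := ZMod.cast_natCast (R := ZMod q) hqd (2 : ℕ)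
          push_cast at this
          exact this
        exact h2.symm
      -- 2 is a square mod m
      have hm8 : m % 8 = 1 ∨ m % 8 = 7 := by
        refine ih m hmlt hmodd ?_
        refine ⟨ZMod.castHom hdm (ZMod m) x, ?_⟩
        rw [← map_pow, hx]; simp
        have := ZMod.cast_natCast (R := ZMod m) hdm (2 : ℕ)
        push_cast at this
        exact this
      have hmul : n % 8 = (q % 8) * (m % 8) % 8 := by
        rw [hnm, Nat.mul_mod]
      rcases hq8 with hq8 | hq8 <;> rcases hm8 with hm8 | hm8 <;>
        rw [hq8, hm8] at hmul <;> omega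

theorem pi_coeffs_mod_eight (p : ℕ) (hp : p.Prime) (h16 : p % 16 = 7) (u v : ℤ)
    (huv : u ^ 2 - (p : ℤ) * v ^ 2 = 2) :
    (v % 8 = 1 ∨ v % 8 = 7) ∧ (u % 8 = 3 ∨ u % 8 = 5) := by
  -- v is odd
  have hvodd : v % 2 = 1 := by
    by_contra hve
    have hve' : v % 2 = 0 := by omega
    obtain ⟨b, hb⟩ : ∃ b, v = 2 * b := ⟨v / 2, by omega⟩
    have hu2 : u ^ 2 = 2 + 4 * ((p : ℤ) * b ^ 2) := by
      rw [hb] at huv; linarith [huv]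
    have hueven : u % 2 = 0 := by
      rcases Int.even_or_odd u with he | ho
      · exact Int.even_iff.1 he
      · exfalso
        obtain ⟨a, ha⟩ := ho
        have : (2 * a + 1) ^ 2 = 4 * (a ^ 2 + a) + 1 := by ring
        rw [ha, this] at hu2
        omega
    obtain ⟨a, ha⟩ : ∃ a, u = 2 * a := ⟨u / 2, by omega⟩
    have : (2 * a) ^ 2 = 4 * a ^ 2 := by ring
    rw [ha, this] at hu2
    omega
  set n := v.natAbs with hn
  have hnodd : Odd n := by
    rw [Nat.odd_iff]
    omega
  -- 2 is a square mod n
  have hsq : ∃ x : ZMod n, x ^ 2 = 2 := by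
    refine ⟨(u : ZMod n), ?_⟩
    have hdvd : (n : ℤ) ∣ u ^ 2 - 2 := by
      have : u ^ 2 - 2 = (p : ℤ) * v ^ 2 := by linarith
      rw [this]
      exact Dvd.dvd.mul_left (dvd_pow (Int.natAbs_dvd.2 dvd_rfl) two_ne_zero) _
    have := (ZMod.intCast_zmod_eq_zero_iff_dvd (u ^ 2 - 2) n).2 hdvd
    push_cast at this
    linear_combination this
  have hn8 : n % 8 = 1 ∨ n % 8 = 7 := two_sq_mod_eight n hnodd hsq
  have hv8 : v % 8 = 1 ∨ v % 8 = 7 := by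
    have := Int.natAbs_eq v
    omega
  refine ⟨hv8, ?_⟩
  -- v^2 ≡ 1 mod 16
  have hv16 : v ^ 2 % 16 = 1 := by
    rcases hv8 with h | h
    · obtain ⟨k, hk⟩ : ∃ k, v = 8 * k + 1 := ⟨v / 8, by omega⟩
      have : v ^ 2 = 16 * (4 * k ^ 2 + k) + 1 := by rw [hk]; ring
      omega
    · obtain ⟨k, hk⟩ : ∃ k, v = 8 * k + 7 := ⟨v / 8, by omega⟩
      have : v ^ 2 = 16 * (4 * k ^ 2 + 7 * k + 3) + 1 := by rw [hk]; ring
      omega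
  -- p ≡ 7 mod 16
  obtain ⟨w, hw⟩ : ∃ w, v ^ 2 = 16 * w + 1 := ⟨v ^ 2 / 16, by omega⟩
  obtain ⟨mm, hmm⟩ : ∃ mm : ℤ, (p : ℤ) = 16 * mm + 7 := ⟨(p : ℤ) / 16, by omega⟩
  have hu16 : u ^ 2 % 16 = 9 := by
    rw [hmm, hw] at huv
    have : u ^ 2 = 16 * (16 * mm * w + mm + 7 * w) + 9 := by linear_combination huv
    omega
  -- conclude u % 8
  obtain ⟨t, a, ha, ha8, hu⟩ : ∃ t a, 0 ≤ a ∧ a < 8 ∧ u = 8 * t + a :=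
    ⟨u / 8, u % 8, Int.emod_nonneg u (by norm_num), by omega, by omega⟩
  have hexp : u ^ 2 = 16 * (4 * t ^ 2 + t * a) + a ^ 2 := by rw [hu]; ring
  interval_cases a <;> norm_num at hexp <;> omega
end

section
/- Let p be a prime with p ≡ 7 (mod 16). Then in the ring ℤ[i]/(p), the class of (1+i)^{(p²−1)/4} equals −1. -/
theorem one_add_i_pow_eq_neg_one (p : ℕ) (hp : p.Prime) (h : p % 16 = 7) :
    Ideal.Quotient.mk (Ideal.span {(p : GaussianInt)})
      ((1 + Zsqrtd.sqrtd) ^ ((p ^ 2 - 1) / 4)) = -1 := by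
  obtain ⟨m, rfl⟩ : ∃ m, p = 16 * m + 7 := ⟨p / 16, by omega⟩
  set p := 16 * m + 7 with hpdef
  have hsq : p ^ 2 = 256 * (m * m) + 224 * m + 49 := by rw [hpdef]; ring
  have h4 : (p ^ 2 - 1) / 4 = 2 * (32 * (m * m) + 28 * m + 6) := by omega
  set k := 32 * (m * m) + 28 * m + 6 with hk
  -- i^2 = -1
  have hi2 : (Zsqrtd.sqrtd : GaussianInt) ^ 2 = -1 := by
    ext <;> simp [pow_two, Zsqrtd.sqrtd, Zsqrtd.re_mul, Zsqrtd.im_mul]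
  -- (1+i)^2 = 2 i
  have h2i : ((1 + Zsqrtd.sqrtd : GaussianInt)) ^ 2 = 2 * Zsqrtd.sqrtd := by
    have e : ((1 + Zsqrtd.sqrtd : GaussianInt)) ^ 2
        = Zsqrtd.sqrtd ^ 2 + 2 * Zsqrtd.sqrtd + 1 := by ring
    rw [e, hi2]; ring
  -- i^k = -1
  have hik : (Zsqrtd.sqrtd : GaussianInt) ^ k = -1 := by
    have hk4 : k = 4 * (8 * (m * m) + 7 * m + 1) + 2 := by rw [hk]; ring
    have h4' : (Zsqrtd.sqrtd : GaussianInt) ^ 4 = 1 := by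
      rw [show (4 : ℕ) = 2 * 2 from rfl, pow_mul, hi2]; ring
    rw [hk4, pow_add, pow_mul, h4', one_pow, one_mul, hi2]
  -- 2^k ≡ 1 mod p
  haveI : Fact (Nat.Prime p) := ⟨hp⟩
  have hp2 : p ≠ 2 := by omega
  obtain ⟨b, hb⟩ := (ZMod.exists_sq_eq_two_iff (p := p) hp2).mpr (Or.inr (by omega))
  have hbne : b ≠ 0 := by
    intro h0
    rw [h0, mul_zero] at hb
    have h2z : ((2 : ℕ) : ZMod p) = 0 := by exact_mod_cast hb
    have := (ZMod.natCast_eq_zero_iff 2 p).mp h2z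
    have := Nat.le_of_dvd (by norm_num) this
    omega
  have h2pow : (2 : ZMod p) ^ k = 1 := by
    have hkk : k = (16 * m + 6) * (2 * m + 1) := by rw [hk]; ring
    have hcard : (2 : ZMod p) ^ (16 * m + 6) = 1 := by
      have hcalc : (2 : ZMod p) ^ (16 * m + 6) = (b * b) ^ (16 * m + 6) := by rw [← hb]
      rw [hcalc, ← pow_two, ← pow_mul]
      have e2 : (2 * (16 * m + 6)) = (p - 1) * 2 := by omega
      rw [e2, pow_mul, ZMod.pow_card_sub_one_eq_one hbne, one_pow]
    rw [hkk, pow_mul, hcard, one_pow]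
  have hdvdZ : (p : ℤ) ∣ (2 : ℤ) ^ k - 1 := by
    have : (((2 : ℤ) ^ k - 1 : ℤ) : ZMod p) = 0 := by push_cast; rw [h2pow]; ring
    exact (ZMod.intCast_zmod_eq_zero_iff_dvd _ p).mp this
  have hdvdG : (p : GaussianInt) ∣ (2 : GaussianInt) ^ k - 1 := by
    have h1 : (((p : ℤ)) : GaussianInt) ∣ ((((2 : ℤ) ^ k - 1 : ℤ)) : GaussianInt) := by
      have := map_dvd (Int.castRingHom GaussianInt) hdvdZ
      simpa only [eq_intCast] using this
    have e1 : (((p : ℤ)) : GaussianInt) = (p : GaussianInt) := by push_cast; ring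
    have e2 : ((((2 : ℤ) ^ k - 1 : ℤ)) : GaussianInt) = (2 : GaussianInt) ^ k - 1 := by
      push_cast; ring
    rwa [e1, e2] at h1
  have hmk2 : Ideal.Quotient.mk (Ideal.span {(p : GaussianInt)}) ((2 : GaussianInt) ^ k) = 1 := by
    rw [show (1 : GaussianInt ⧸ Ideal.span {(p : GaussianInt)})
        = Ideal.Quotient.mk _ 1 from rfl, Ideal.Quotient.eq, Ideal.mem_span_singleton]
    exact hdvdG
  rw [h4, pow_mul, h2i, mul_pow, hik, mul_neg_one, RingHom.map_neg, hmk2]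
end

section
/- Let p be a prime with p ≡ 7 (mod 16) and let s be an element of the field 𝔽_p with s² = 2. Then 2 + s is not a square in 𝔽_p. -/
theorem two_add_sqrt_two_nonsquare (p : ℕ) (hp : p.Prime) (h : p % 16 = 7)
    (s : ZMod p) (hs : s ^ 2 = 2) :
    ¬ IsSquare (2 + s) := by
  intro hsq
  haveI := Fact.mk hp
  obtain ⟨r, hr⟩ := hsq
  obtain ⟨k, hk⟩ : ∃ k, p = 16 * k + 7 := ⟨p / 16, by omega⟩
  set K := AlgebraicClosure (ZMod p) with hK
  haveI : CharP K p := charP_of_injective_algebraMap (algebraMap (ZMod p) K).injective p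
  have htwo : (2 : K) ≠ 0 := by
    have h2n : ((2 : ℕ) : K) ≠ 0 := by
      rw [Ne, CharP.cast_eq_zero_iff K p 2]
      intro hd
      have := Nat.le_of_dvd (by norm_num) hd
      omega
    simpa using h2n
  set a : K := algebraMap (ZMod p) K s with ha_def
  set b : K := algebraMap (ZMod p) K r with hb_def
  have ha : a ^ 2 = 2 := by
    rw [ha_def, ← map_pow, hs]
    exact map_ofNat _ 2
  have hb : b ^ 2 = 2 + a := by
    have : (r : ZMod p) ^ 2 = 2 + s := by rw [sq, ← hr]
    rw [hb_def, ← map_pow, this, ha_def, map_add]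
    rw [map_ofNat]
  have hbp : b ^ p = b := by rw [hb_def, ← map_pow, ZMod.pow_card]
  obtain ⟨ζ, hζ⟩ := IsAlgClosed.exists_root
    (Polynomial.C 1 * Polynomial.X ^ 2 + Polynomial.C (-b) * Polynomial.X + Polynomial.C 1)
    (by rw [Polynomial.degree_quadratic one_ne_zero]; exact two_ne_zero)
  have h2 : ζ ^ 2 = b * ζ - 1 := by
    have h' := hζ
    simp only [Polynomial.IsRoot, Polynomial.eval_add, Polynomial.eval_mul, Polynomial.eval_pow,
      Polynomial.eval_C, Polynomial.eval_X] at h'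
    linear_combination h'
  have hζ0 : ζ ≠ 0 := by
    intro h0
    rw [h0] at h2
    exact one_ne_zero (by linear_combination h2 : (1 : K) = 0)
  have h4 : ζ ^ 4 = b * a * ζ - (1 + a) := by
    have e : ζ ^ 4 = (b * ζ - 1) ^ 2 := by rw [show ζ ^ 4 = (ζ ^ 2) ^ 2 by ring, h2]
    rw [e]
    linear_combination b ^ 2 * h2 + (b * ζ - 1) * hb
  have h8 : ζ ^ 8 = -1 := by
    have e : ζ ^ 8 = (b * a * ζ - (1 + a)) ^ 2 := by rw [show ζ ^ 8 = (ζ ^ 4) ^ 2 by ring, h4]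
    rw [e]
    linear_combination (b ^ 2 * a ^ 2) * h2 + (b * a ^ 2 * ζ - a ^ 2) * hb +
      (b * a * ζ - a - 1) * ha
  have h16 : ζ ^ 16 = 1 := by
    rw [show (16 : ℕ) = 8 * 2 from rfl, pow_mul, h8, neg_one_sq]
  -- Frobenius
  have hfr : (ζ ^ p) ^ 2 = b * ζ ^ p - 1 := by
    have h1 : (ζ ^ 2) ^ p = (b * ζ - 1) ^ p := by rw [h2]
    rw [sub_pow_char, mul_pow, one_pow, hbp] at h1
    calc (ζ ^ p) ^ 2 = (ζ ^ 2) ^ p := by rw [← pow_mul, ← pow_mul, Nat.mul_comm]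
    _ = b * ζ ^ p - 1 := h1
  have hfac : (ζ ^ p - ζ) * (ζ ^ p - (b - ζ)) = 0 := by
    linear_combination hfr - h2
  have hp7 : ζ ^ p = ζ ^ (16 * k + 7) := congrArg (fun n => ζ ^ n) hk
  rcases mul_eq_zero.mp hfac with hc | hc
  · -- ζ^p = ζ, so ζ^7 = ζ, ζ^6 = 1, ζ^2 = 1, contradiction with ζ^8 = -1
    have hc' : ζ ^ p = ζ := sub_eq_zero.mp hc
    have e7 : ζ ^ 7 = ζ := by
      rw [hp7, pow_add, pow_mul, h16, one_pow, one_mul] at hc'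
      exact hc'
    have h6 : ζ ^ 6 = 1 := by
      have : ζ * ζ ^ 6 = ζ * 1 := by rw [mul_one]; linear_combination e7
      exact mul_left_cancel₀ hζ0 this
    have h2' : ζ ^ 2 = 1 := by
      have e18 : ζ ^ 18 = 1 := by
        rw [show (18 : ℕ) = 6 * 3 from rfl, pow_mul, h6, one_pow]
      have e18' : ζ ^ 18 = ζ ^ 2 := by
        rw [show (18 : ℕ) = 16 + 2 from rfl, pow_add, h16, one_mul]
      rw [← e18', e18]
    have : (1 : K) = -1 := by
      rw [← h8, show (8 : ℕ) = 2 * 4 from rfl, pow_mul, h2', one_pow]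
    exact htwo (by linear_combination this)
  · -- ζ^p = b - ζ, so ζ^(p+1) = 1 but also = -1
    have hc' : ζ ^ p = b - ζ := sub_eq_zero.mp hc
    have e1 : ζ ^ p * ζ = 1 := by rw [hc']; linear_combination -h2
    have e2 : ζ ^ p * ζ = -1 := by
      rw [hp7, pow_add, pow_mul, h16, one_pow, one_mul, ← pow_succ, h8]
    rw [e1] at e2
    exact htwo (by linear_combination e2)
end

section
/- Let p be a prime with p ≡ 3 (mod 4) and let K = ℚ(√p). If ε ∈ 𝒪_K is a unit which is a norm from ℚ(p^{1/4}) — concretely, if there exist α, β ∈ ℤ[√p] with α² − √p·β² = ε — then ε ≡ 1 (mod √p), i.e., writing ε = x + y√p with x, y ∈ ℤ one has x ≡ 1 (mod p). -/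
/-!
Reduce modulo the prime `(√p)`: the residue map `ℤ[√p] → 𝔽_p` sends `x + y√p` to `x`, so the
relation `α² − √p β² = ε` makes the residue of `ε` a square, while `N ε = ±1` makes its square
`±1`. Since `p ≡ 3 (mod 4)`, `−1` is not a square in `𝔽_p`; this excludes both `ε² ≡ −1` and
`ε ≡ −1`, leaving `ε ≡ 1`.
-/

theorem eq_one_of_isSquare_of_sq_eq_one_or_neg_one {R : Type*} [Ring R] [NoZeroDivisors R]
    (hneg : ¬IsSquare (-1 : R)) {x : R} (hx : IsSquare x) (hx2 : x ^ 2 = 1 ∨ x ^ 2 = -1) :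
    x = 1 := by
  obtain ⟨a, rfl⟩ := hx
  rcases hx2 with hx2 | hx2
  · rcases sq_eq_one_iff.mp hx2 with h | h
    · exact h
    · exact absurd ⟨a, h.symm⟩ hneg
  · exact absurd ⟨a * a, by rw [← hx2, sq]⟩ hneg

namespace Zsqrtd

variable {R : Type*} [CommRing R] {d : ℤ}

def modSqrtd (hd : (d : R) = 0) : ℤ√d →+* R :=
  lift ⟨0, by rw [hd, mul_zero]⟩

theorem modSqrtd_apply (hd : (d : R) = 0) (z : ℤ√d) : modSqrtd hd z = z.re := by
  simp [modSqrtd]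

theorem intCast_norm_eq_sq_re (hd : (d : R) = 0) (z : ℤ√d) : (z.norm : R) = (z.re : R) ^ 2 := by
  simp [norm_def, hd, sq]

theorem norm_eq_one_or_neg_one_of_isUnit {z : ℤ√d} (hz : IsUnit z) : z.norm = 1 ∨ z.norm = -1 :=
  Int.isUnit_iff.mp ((isUnit_iff_norm_isUnit z).mp hz)

end Zsqrtd

theorem unit_norm_cong_one (p : ℕ) (hp : p.Prime) (h4 : p % 4 = 3)
    (ε α β : Zsqrtd (p : ℤ)) (hunit : IsUnit ε)
    (hnorm : α ^ 2 - Zsqrtd.sqrtd * β ^ 2 = ε) :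
    ε.re ≡ 1 [ZMOD (p : ℤ)] := by
  have : Fact p.Prime := ⟨hp⟩
  have hd : ((p : ℤ) : ZMod p) = 0 := by simp
  have hsquare : IsSquare (ε.re : ZMod p) := ⟨α.re, by
    simpa [Zsqrtd.modSqrtd_apply, sq] using (congrArg (Zsqrtd.modSqrtd hd) hnorm).symm⟩
  have hsq : (ε.re : ZMod p) ^ 2 = 1 ∨ (ε.re : ZMod p) ^ 2 = -1 := by
    rw [← Zsqrtd.intCast_norm_eq_sq_re hd]
    rcases Zsqrtd.norm_eq_one_or_neg_one_of_isUnit hunit with h | h <;> simp [h]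
  have hneg : ¬IsSquare (-1 : ZMod p) := by
    rw [ZMod.exists_sq_eq_neg_one_iff, h4]
    decide
  rw [← ZMod.intCast_eq_intCast_iff, Int.cast_one]
  exact eq_one_of_isSquare_of_sq_eq_one_or_neg_one hneg hsquare hsq
end
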